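/- (Dissipation formula, scalar case) For a scalar conservation law with flux f and strictly convex entropy η, let σ(s) := (f(u_- + s) - f(u_-))/s be the shock speed along the shock curve from u_-, with σ(0) = f'(u_-). Then for u_+ = u_- + s₀ and any v: [q(u_+;v) - σ(s₀)η(u_+|v)] - [q(u_-;v) - σ(s₀)η(u_-|v)] = ∫₀^{s₀} σ'(t) η(u_- | u_- + t) dt. -/

import Mathlib

/-!
With `σ = dslope f u₋`, the function `G u = q u - σ u * (η u - η u₋)` satisfies
`G' = σ' * η(u₋|u)` away from `u₋`: the compatibility `q' = η' f'` and the identity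
`(u - u₋) σ' = f' - σ` combine the three terms of `G'` into one. The integrand agrees off `u₋`
with the continuous function `(f' - σ) (η' - dslope η u₋)`, so it is integrable and the fundamental
theorem of calculus (off a countable set) gives `G u₊ - G u₋`. The `v`-terms on the left cancel by
the Rankine–Hugoniot relation `f u₊ - f u₋ = σ(u₊) (u₊ - u₋)`.
-/

open MeasureTheory intervalIntegral Set Filter Topology

noncomputable def relEntropy (η : ℝ → ℝ) (u v : ℝ) : ℝ := η u - η v - deriv η v * (u - v)

section DSlope

variable {𝕜 E : Type*} [NontriviallyNormedField 𝕜] [NormedAddCommGroup E] [NormedSpace 𝕜 E]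
  {f : 𝕜 → E} {f' : E} {a x : 𝕜}

theorem continuous_dslope (hf : Differentiable 𝕜 f) (a : 𝕜) : Continuous (dslope f a) :=
  continuousOn_univ.1 <| (continuousOn_dslope univ_mem).2 ⟨hf.continuous.continuousOn, hf a⟩

theorem hasDerivAt_dslope_of_ne (hf : HasDerivAt f f' x) (hx : x ≠ a) :
    HasDerivAt (dslope f a) ((x - a)⁻¹ • (f' - dslope f a x)) x := by
  have hxa : x - a ≠ 0 := sub_ne_zero.2 hx
  have hslope : HasDerivAt (fun y => (y - a)⁻¹ • (f y - f a))
      ((x - a)⁻¹ • f' + (-1 / (x - a) ^ 2) • (f x - f a)) x :=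
    (((hasDerivAt_id' x).sub_const a).inv hxa).smul (hf.sub_const (f a))
  refine (hslope.congr_of_eventuallyEq ?_).congr_deriv ?_
  · filter_upwards [dslope_eventuallyEq_slope_of_ne f hx] with y hy
    rw [hy, slope_def_module]
  · rw [dslope_of_ne f hx, slope_def_module, smul_sub (x - a)⁻¹ f', smul_smul, ← sq,
      neg_div, one_div, neg_smul, inv_pow, ← sub_eq_add_neg]

end DSlope

section Dissipation

variable {f η q : ℝ → ℝ} {a x : ℝ}

theorem deriv_dslope_mul_relEntropy_of_ne (hf : DifferentiableAt ℝ f x) (hx : x ≠ a) :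
    deriv (dslope f a) x * relEntropy η a x
      = (deriv f x - dslope f a x) * (deriv η x - dslope η a x) := by
  rw [(hasDerivAt_dslope_of_ne hf.hasDerivAt hx).deriv, dslope_of_ne η hx, slope_def_field,
    relEntropy, smul_eq_mul]
  field_simp [sub_ne_zero.2 hx]
  ring

theorem hasDerivAt_sub_dslope_mul (hf : DifferentiableAt ℝ f x) (hη : DifferentiableAt ℝ η x)
    (hq : HasDerivAt q (deriv η x * deriv f x) x) (hx : x ≠ a) :
    HasDerivAt (fun y => q y - dslope f a y * (η y - η a))
      (deriv (dslope f a) x * relEntropy η a x) x := by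
  have hS := hasDerivAt_dslope_of_ne hf.hasDerivAt hx
  refine (hq.sub (hS.mul (hη.hasDerivAt.sub_const (η a)))).congr_deriv ?_
  rw [hS.deriv, relEntropy, smul_eq_mul]
  field_simp [sub_ne_zero.2 hx]
  ring

theorem intervalIntegrable_deriv_dslope_mul_relEntropy (hf : ContDiff ℝ 1 f)
    (hη : ContDiff ℝ 1 η) (a b : ℝ) :
    IntervalIntegrable (fun x => deriv (dslope f a) x * relEntropy η a x) volume a b := by
  have hf' := hf.differentiable one_ne_zero
  have hη' := hη.differentiable one_ne_zero
  have hcont : Continuous fun x => (deriv f x - dslope f a x) * (deriv η x - dslope η a x) :=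
    ((hf.continuous_deriv le_rfl).sub (continuous_dslope hf' a)).mul
      ((hη.continuous_deriv le_rfl).sub (continuous_dslope hη' a))
  refine (hcont.intervalIntegrable a b).congr_uIoo fun x hx => ?_
  exact (deriv_dslope_mul_relEntropy_of_ne (hf' x) (ne_of_mem_of_not_mem hx left_notMem_uIoo)).symm

theorem sub_sub_dslope_mul_eq_integral (hf : ContDiff ℝ 1 f) (hη : ContDiff ℝ 1 η)
    (hq : Differentiable ℝ q) (hpair : ∀ x, deriv q x = deriv η x * deriv f x) (a b : ℝ) :
    q b - q a - dslope f a b * (η b - η a)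
      = ∫ x in a..b, deriv (dslope f a) x * relEntropy η a x := by
  have hf' := hf.differentiable one_ne_zero
  have hη' := hη.differentiable one_ne_zero
  have hcont : Continuous fun y => q y - dslope f a y * (η y - η a) :=
    hq.continuous.sub ((continuous_dslope hf' a).mul (hη'.continuous.sub continuous_const))
  rw [integral_eq_of_hasDerivAt_off_countable _ _ (countable_singleton a) hcont.continuousOn
    (fun x hx => hasDerivAt_sub_dslope_mul (hf' x) (hη' x) (hpair x ▸ (hq x).hasDerivAt) hx.2)
    (intervalIntegrable_deriv_dslope_mul_relEntropy hf hη a b), sub_self, mul_zero, sub_zero,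
    sub_right_comm]

end Dissipation

theorem eq_dslope_comp_const_add {f σ : ℝ → ℝ} {a : ℝ}
    (hσ : ∀ s, s ≠ 0 → σ s = (f (a + s) - f a) / s) (hσ0 : σ 0 = deriv f a) :
    σ = fun s => dslope f a (a + s) := by
  ext s
  rcases eq_or_ne s 0 with rfl | hs
  · rw [add_zero, dslope_same, hσ0]
  · rw [hσ s hs, dslope_of_ne f (by simpa using hs), slope_def_field, add_sub_cancel_left]

theorem stmt_17_general (f η q : ℝ → ℝ)
    (hf : ContDiff ℝ 2 f) (hη : ContDiff ℝ 2 η) (hq : ContDiff ℝ 2 q)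
    (hpair : ∀ x : ℝ, deriv q x = deriv η x * deriv f x)
    (um s₀ : ℝ) (σ : ℝ → ℝ)
    (hσ : ∀ s : ℝ, s ≠ 0 → σ s = (f (um + s) - f um) / s) (hσ0 : σ 0 = deriv f um) :
    ∀ v : ℝ,
      ((q (um + s₀) - q v - deriv η v * (f (um + s₀) - f v))
          - σ s₀ * (η (um + s₀) - η v - deriv η v * (um + s₀ - v)))
      - ((q um - q v - deriv η v * (f um - f v)) - σ s₀ * (η um - η v - deriv η v * (um - v)))
      = ∫ t in (0 : ℝ)..s₀,
          deriv σ t * (η um - η (um + t) - deriv η (um + t) * (um - (um + t))) := by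
  intro v
  have hσ_dslope := eq_dslope_comp_const_add hσ hσ0
  have hchord : f (um + s₀) - f um = s₀ * dslope f um (um + s₀) := by
    rw [← sub_smul_dslope, smul_eq_mul, add_sub_cancel_left]
  have hdissip := sub_sub_dslope_mul_eq_integral (hf.of_le (by norm_num)) (hη.of_le (by norm_num))
    (hq.differentiable (by norm_num)) hpair um (um + s₀)
  have hshift : ∫ t in (0 : ℝ)..s₀, deriv σ t * relEntropy η um (um + t)
      = ∫ x in um..um + s₀, deriv (dslope f um) x * relEntropy η um x := by
    simp only [hσ_dslope, deriv_comp_const_add]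
    rw [integral_comp_add_left (fun x => deriv (dslope f um) x * relEntropy η um x), add_zero]
  unfold relEntropy at hshift hdissip
  rw [hshift, ← hdissip, hσ_dslope]
  linear_combination - deriv η v * hchord

/-- Dissipation formula, scalar case: with σ(s) = (f(u₋+s)-f(u₋))/s (σ(0) = f'(u₋)) and
u₊ = u₋ + s₀, for every v:
[q(u₊;v) - σ(s₀)η(u₊|v)] - [q(u₋;v) - σ(s₀)η(u₋|v)] = ∫₀^{s₀} σ'(t) η(u₋|u₋+t) dt. -/
theorem stmt_17 (f η q : ℝ → ℝ)
    (hf : ContDiff ℝ 2 f) (hη : ContDiff ℝ 2 η) (hq : ContDiff ℝ 2 q)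
    (hconv : ∀ x : ℝ, 0 < deriv (deriv η) x)
    (hpair : ∀ x : ℝ, deriv q x = deriv η x * deriv f x)
    (um s₀ : ℝ) (σ : ℝ → ℝ)
    (hσ : ∀ s : ℝ, s ≠ 0 → σ s = (f (um + s) - f um) / s) (hσ0 : σ 0 = deriv f um) :
    ∀ v : ℝ,
      ((q (um + s₀) - q v - deriv η v * (f (um + s₀) - f v))
          - σ s₀ * (η (um + s₀) - η v - deriv η v * (um + s₀ - v)))
      - ((q um - q v - deriv η v * (f um - f v)) - σ s₀ * (η um - η v - deriv η v * (um - v)))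
      = ∫ t in (0 : ℝ)..s₀,
          deriv σ t * (η um - η (um + t) - deriv η (um + t) * (um - (um + t))) :=
  stmt_17_general f η q hf hη hq hpair um s₀ σ hσ hσ0
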